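/- Let v_1,…,v_n be gross substitute integer-valued valuations on a finite set Ω and p an integer price vector. Then for every set S ⊆ Ω, L(p + 1_S) = L(p) − f_p(S). Consequently a set S maximizes f_p over all subsets of Ω if and only if it minimizes T ↦ L(p + 1_T) over all subsets T ⊆ Ω, and the inclusion-minimal maximizers of f_p coincide with the inclusion-minimal minimizers of T ↦ L(p + 1_T); in particular the price-update sets of the Gul–Stacchetti auction and of Ausubel's ascending auction coincide at p. -/
import Mathlib


open Finset

noncomputable section

variable {Ω : Type*}

/-- The utility of a set `S` under valuation `v` and price vector `p`. -/
def util (v : Finset Ω → ℝ) (p : Ω → ℝ) (S : Finset Ω) : ℝ := v S - ∑ j ∈ S, p j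

/-- The demand set: all sets maximizing utility. -/
def Demand (v : Finset Ω → ℝ) (p : Ω → ℝ) : Set (Finset Ω) :=
  {S | ∀ T : Finset Ω, util v p T ≤ util v p S}

/-- The minimal demand sets: demand sets all of whose proper subsets have strictly
smaller utility. -/
def DemandMin (v : Finset Ω → ℝ) (p : Ω → ℝ) : Set (Finset Ω) :=
  {S | S ∈ Demand v p ∧ ∀ T : Finset Ω, T ⊂ S → util v p T < util v p S}

/-- The maximum utility of a player. -/
def maxUtil [Fintype Ω] (v : Finset Ω → ℝ) (p : Ω → ℝ) : ℝ :=
  Finset.univ.sup' Finset.univ_nonempty (util v p)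

/-- A valuation: zero on the empty set and monotone under inclusion. -/
def IsValuation (v : Finset Ω → ℝ) : Prop :=
  v ∅ = 0 ∧ ∀ S T : Finset Ω, S ⊆ T → v S ≤ v T

/-- Gross substitutes: if prices (weakly) increase, there is a demanded set containing
all previously demanded items whose price did not change. -/
def GrossSubstitute (v : Finset Ω → ℝ) : Prop :=
  ∀ p q : Ω → ℝ, (∀ j, 0 ≤ p j) → (∀ j, p j ≤ q j) →
    ∀ S ∈ Demand v p, ∃ S' ∈ Demand v q, ∀ j ∈ S, p j = q j → j ∈ S'

/-- `GGS k M`: the `(k,M)`-truncations of gross substitute valuations. -/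
def GGS (k : ℕ) (M : ℝ) (v : Finset Ω → ℝ) : Prop :=
  ∃ g : Finset Ω → ℝ, IsValuation g ∧ GrossSubstitute g ∧
    (∀ S : Finset Ω, S.card < k → v S = g S ∧ g S ≤ M) ∧
    (∀ S : Finset Ω, k ≤ S.card → v S = M ∧ M ≤ g S)

/-- `f_{v,p}(S) = min_{D ∈ D*_v(p)} |D ∩ S|`. -/
def fMin [DecidableEq Ω] (v : Finset Ω → ℝ) (p : Ω → ℝ) (S : Finset Ω) : ℕ :=
  sInf ((fun D => (D ∩ S).card) '' DemandMin v p)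

/-- `f_p(S) = (Σ_i f_{i,p}(S)) − |S|`. -/
def fTot [DecidableEq Ω] {n : ℕ} (v : Fin n → Finset Ω → ℝ) (p : Ω → ℝ) (S : Finset Ω) : ℤ :=
  (∑ i, (fMin (v i) p S : ℤ)) - S.card

/-- The Lyapunov function `L(p) = Σ_i u_{i,p} + Σ_j p(j)`. -/
def Lyap [Fintype Ω] {n : ℕ} (v : Fin n → Finset Ω → ℝ) (p : Ω → ℝ) : ℝ :=
  (∑ i, maxUtil (v i) p) + ∑ j, p j

/-- An envy-free allocation: pairwise disjoint sets, each demanded by its player. -/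
def EnvyFree {n : ℕ} (v : Fin n → Finset Ω → ℝ) (p : Ω → ℝ) (A : Fin n → Finset Ω) : Prop :=
  (∀ i j, i ≠ j → Disjoint (A i) (A j)) ∧ ∀ i, A i ∈ Demand (v i) p

/-- A Walrasian allocation: envy-free, and every unallocated item has price zero. -/
def Walrasian {n : ℕ} (v : Fin n → Finset Ω → ℝ) (p : Ω → ℝ) (A : Fin n → Finset Ω) : Prop :=
  EnvyFree v p A ∧ ∀ x : Ω, (∀ i, x ∉ A i) → p x = 0

/-- `addInd p S = p + 1_S`: increase the price of every item of `S` by one. -/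
def addInd [DecidableEq Ω] (p : Ω → ℝ) (S : Finset Ω) : Ω → ℝ :=
  fun j => p j + if j ∈ S then 1 else 0

/-- An integer price vector. -/
def IsIntVec (p : Ω → ℝ) : Prop := ∀ j, ∃ z : ℤ, p j = z

/-- An integer-valued valuation. -/
def IsIntVal (v : Finset Ω → ℝ) : Prop := ∀ S : Finset Ω, ∃ z : ℤ, v S = z

/-- A small player: every demanded set is a singleton. -/
def SmallPlayer (v : Finset Ω → ℝ) (p : Ω → ℝ) : Prop :=
  ∀ S ∈ Demand v p, ∃ x, S = {x}

/-! ### Auxiliary lemmas -/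

section Aux

variable {Ω : Type*}

lemma mem_demand {v : Finset Ω → ℝ} {p : Ω → ℝ} {S : Finset Ω} :
    S ∈ Demand v p ↔ ∀ T : Finset Ω, util v p T ≤ util v p S := Iff.rfl

lemma util_int {v : Finset Ω → ℝ} {p : Ω → ℝ}
    (hv : IsIntVal v) (hp : IsIntVec p) (T : Finset Ω) : ∃ z : ℤ, util v p T = z := by
  classical
  obtain ⟨z, hz⟩ := hv T
  choose w hw using hp
  refine ⟨z - ∑ j ∈ T, w j, ?_⟩
  have : (∑ j ∈ T, p j) = ((∑ j ∈ T, w j : ℤ) : ℝ) := by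
    push_cast
    exact Finset.sum_congr rfl fun j _ => hw j
  rw [util, hz, this]
  push_cast
  ring

lemma int_gap {a b : ℝ} (ha : ∃ z : ℤ, a = z) (hb : ∃ z : ℤ, b = z) (h : a < b) :
    a + 1 ≤ b := by
  obtain ⟨za, rfl⟩ := ha
  obtain ⟨zb, rfl⟩ := hb
  have : za < zb := by exact_mod_cast h
  exact_mod_cast Int.add_one_le_of_lt this

lemma exists_demand [Fintype Ω] (v : Finset Ω → ℝ) (p : Ω → ℝ) :
    ∃ S, S ∈ Demand v p ∧ util v p S = maxUtil v p := by
  obtain ⟨S, -, hEq⟩ :=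
    Finset.exists_mem_eq_sup' (s := (Finset.univ : Finset (Finset Ω)))
      Finset.univ_nonempty (util v p)
  refine ⟨S, fun T => ?_, hEq.symm⟩
  calc util v p T ≤ maxUtil v p := Finset.le_sup' _ (Finset.mem_univ T)
    _ = util v p S := hEq

lemma util_le_maxUtil [Fintype Ω] (v : Finset Ω → ℝ) (p : Ω → ℝ) (T : Finset Ω) :
    util v p T ≤ maxUtil v p :=
  Finset.le_sup' _ (Finset.mem_univ T)

lemma demand_util_eq [Fintype Ω] {v : Finset Ω → ℝ} {p : Ω → ℝ} {S : Finset Ω}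
    (h : S ∈ Demand v p) : util v p S = maxUtil v p := by
  obtain ⟨D, hD, hEq⟩ := exists_demand v p
  exact le_antisymm (util_le_maxUtil v p S) (hEq ▸ h D)

/-- Every demanded set contains a minimal demanded set. -/
lemma exists_demandMin_subset [Fintype Ω] {v : Finset Ω → ℝ} {p : Ω → ℝ} {T : Finset Ω}
    (hT : T ∈ Demand v p) : ∃ D ∈ DemandMin v p, D ⊆ T := by
  classical
  obtain ⟨D, hDmem, hDmin⟩ := Finset.exists_min_image
    (T.powerset.filter fun W => util v p W = util v p T) Finset.card
    ⟨T, by simp⟩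
  simp only [Finset.mem_filter, Finset.mem_powerset] at hDmem
  have hDdem : D ∈ Demand v p := fun W => hDmem.2 ▸ hT W
  refine ⟨D, ⟨hDdem, ?_⟩, hDmem.1⟩
  intro W hW
  rcases lt_or_eq_of_le (hDdem W) with h | h
  · exact h
  · exfalso
    have hWmem : W ∈ T.powerset.filter fun W => util v p W = util v p T := by
      simp only [Finset.mem_filter, Finset.mem_powerset]
      exact ⟨hW.subset.trans hDmem.1, h.trans hDmem.2⟩
    exact absurd (hDmin W hWmem) (not_le.mpr (Finset.card_lt_card hW))

lemma demandMin_nonempty [Fintype Ω] (v : Finset Ω → ℝ) (p : Ω → ℝ) :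
    (DemandMin v p).Nonempty := by
  obtain ⟨S, hS, -⟩ := exists_demand v p
  obtain ⟨D, hD, -⟩ := exists_demandMin_subset hS
  exact ⟨D, hD⟩

lemma fMin_spec [Fintype Ω] [DecidableEq Ω] (v : Finset Ω → ℝ) (p : Ω → ℝ) (S : Finset Ω) :
    ∃ D ∈ DemandMin v p, (D ∩ S).card = fMin v p S := by
  obtain ⟨D, hD⟩ := demandMin_nonempty v p
  have : fMin v p S ∈ (fun D => (D ∩ S).card) '' DemandMin v p :=
    Nat.sInf_mem ⟨_, ⟨D, hD, rfl⟩⟩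
  obtain ⟨D', hD', hEq⟩ := this
  exact ⟨D', hD', hEq⟩

lemma fMin_le [Fintype Ω] [DecidableEq Ω] {v : Finset Ω → ℝ} {p : Ω → ℝ} {D : Finset Ω}
    (hD : D ∈ DemandMin v p) (S : Finset Ω) : fMin v p S ≤ (D ∩ S).card :=
  Nat.sInf_le ⟨D, hD, rfl⟩

lemma util_addInd [DecidableEq Ω] (v : Finset Ω → ℝ) (p : Ω → ℝ) (S T : Finset Ω) :
    util v (addInd p S) T = util v p T - ((T ∩ S).card : ℝ) := by
  have h1 : (∑ j ∈ T, (if j ∈ S then (1 : ℝ) else 0)) = ((T ∩ S).card : ℝ) := by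
    rw [Finset.sum_ite_mem]
    simp
  simp only [util, addInd, Finset.sum_add_distrib, h1]
  ring

/-- Weak single improvement property for gross substitute valuations:
if `A` is not demanded, then some set obtained from `A` by adding at most one item
(and deleting any number of items) has strictly larger utility. -/
lemma weakSI [Fintype Ω] [DecidableEq Ω] {v : Finset Ω → ℝ} (hval : IsValuation v) (hgs : GrossSubstitute v)
    {p : Ω → ℝ} (hp : ∀ j, 0 ≤ p j) {A : Finset Ω} (hA : A ∉ Demand v p) :
    ∃ (x : Ω) (A' : Finset Ω), A' ⊆ insert x A ∧ util v p A < util v p A' := by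
  classical
  by_contra hcon
  push_neg at hcon
  -- hcon : ∀ x A', A' ⊆ insert x A → util v p A' ≤ util v p A
  have hB : ∃ B, util v p A < util v p B := by
    simp only [mem_demand, not_forall, not_le] at hA
    exact hA
  obtain ⟨B, hBgt⟩ := hB
  cases isEmpty_or_nonempty Ω with
  | inl hΩ =>
    have hAe : A = ∅ := Finset.eq_empty_of_forall_notMem fun x _ => (hΩ.false x)
    have hBe : B = ∅ := Finset.eq_empty_of_forall_notMem fun x _ => (hΩ.false x)
    rw [hAe, hBe] at hBgt
    exact lt_irrefl _ hBgt
  | inr hΩ =>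
  obtain ⟨x₀⟩ := hΩ
  have hsubA : ∀ T ⊆ A, util v p T ≤ util v p A := fun T hT =>
    hcon x₀ T (hT.trans (Finset.subset_insert x₀ A))
  have hutil_empty : util v p ∅ = 0 := by simp [util, hval.1]
  have hA0 : 0 ≤ util v p A := hutil_empty ▸ hsubA ∅ (Finset.empty_subset A)
  -- the family of ground sets admitting an improvement
  set 𝒢 : Finset (Finset Ω) := Finset.univ.filter
    (fun G => A ⊆ G ∧ ∃ T ⊆ G, util v p A < util v p T) with h𝒢
  have h𝒢ne : 𝒢.Nonempty := by
    refine ⟨A ∪ B, ?_⟩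
    simp only [h𝒢, Finset.mem_filter, Finset.mem_univ, true_and]
    exact ⟨Finset.subset_union_left, B, Finset.subset_union_right, hBgt⟩
  obtain ⟨G, hGmem, hGmin⟩ := Finset.exists_min_image 𝒢 Finset.card h𝒢ne
  simp only [h𝒢, Finset.mem_filter, Finset.mem_univ, true_and] at hGmem
  obtain ⟨hAG, T₀, hT₀G, hT₀gt⟩ := hGmem
  -- minimality: deleting any element of G \ A kills all improvements
  have hYfree : ∀ y ∈ G \ A, ∀ T ⊆ G.erase y, util v p T ≤ util v p A := by
    intro y hy T hT
    by_contra hlt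
    push_neg at hlt
    have hyG : y ∈ G := (Finset.mem_sdiff.mp hy).1
    have hyA : y ∉ A := (Finset.mem_sdiff.mp hy).2
    have hmem : G.erase y ∈ 𝒢 := by
      simp only [h𝒢, Finset.mem_filter, Finset.mem_univ, true_and]
      refine ⟨fun a ha => Finset.mem_erase.mpr ⟨fun h => hyA (h ▸ ha), hAG ha⟩, T, hT, hlt⟩
    have := hGmin _ hmem
    exact absurd this (not_le.mpr (Finset.card_erase_lt_of_mem hyG))
  -- a maximizer over subsets of G
  obtain ⟨C, hCmem, hCmax⟩ := Finset.exists_max_image G.powerset (util v p)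
    ⟨∅, Finset.mem_powerset.mpr (Finset.empty_subset G)⟩
  have hCsub : C ⊆ G := Finset.mem_powerset.mp hCmem
  have hCmax' : ∀ T ⊆ G, util v p T ≤ util v p C := fun T hT =>
    hCmax T (Finset.mem_powerset.mpr hT)
  have hCA : util v p A < util v p C := lt_of_lt_of_le hT₀gt (hCmax' T₀ hT₀G)
  -- every near-optimal subset of G contains G \ A
  have hGA : ∀ C' ⊆ G, util v p A < util v p C' → G \ A ⊆ C' := by
    intro C' h1 h2 y hy
    by_contra hyC
    have : C' ⊆ G.erase y := fun a ha =>
      Finset.mem_erase.mpr ⟨fun h => hyC (h ▸ ha), h1 ha⟩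
    exact absurd h2 (not_lt.mpr (hYfree y hy C' this))
  -- G \ A has at least two elements
  have hcard : 2 ≤ (G \ A).card := by
    by_contra hc
    push_neg at hc
    rcases Finset.eq_empty_or_nonempty (G \ A) with he | hne
    · have hGA' : G = A := Finset.Subset.antisymm
        (fun g hg => by
          by_contra hgA
          exact absurd (Finset.mem_sdiff.mpr ⟨hg, hgA⟩) (he ▸ Finset.notMem_empty g))
        hAG
      exact absurd (hsubA T₀ (hGA' ▸ hT₀G)) (not_le.mpr hT₀gt)
    · have h1 : (G \ A).card = 1 := le_antisymm (by omega) (Finset.card_pos.mpr hne)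
      obtain ⟨x, hx⟩ := Finset.card_eq_one.mp h1
      have hGsub : G ⊆ insert x A := by
        intro g hg
        by_cases hgA : g ∈ A
        · exact Finset.mem_insert_of_mem hgA
        · have : g ∈ G \ A := Finset.mem_sdiff.mpr ⟨hg, hgA⟩
          rw [hx, Finset.mem_singleton] at this
          exact this ▸ Finset.mem_insert_self g A
      exact absurd (hcon x T₀ (hT₀G.trans hGsub)) (not_le.mpr hT₀gt)
  obtain ⟨y, hy, z, hz, hyz⟩ := Finset.one_lt_card.mp hcard
  have hyG : y ∈ G := (Finset.mem_sdiff.mp hy).1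
  have hyA : y ∉ A := (Finset.mem_sdiff.mp hy).2
  have hzA : z ∉ A := (Finset.mem_sdiff.mp hz).2
  -- set up the price vectors
  set uA := util v p A with huA
  set u' := util v p C with hu'
  set τ : ℝ := u' - uA with hτ
  set M : ℝ := v Finset.univ - uA + 1 with hM
  have hτpos : 0 < τ := by rw [hτ]; linarith [hCA]
  have hub_univ : ∀ T, util v p T ≤ v Finset.univ := by
    intro T
    have h1 : v T ≤ v Finset.univ := hval.2 T Finset.univ (Finset.subset_univ T)
    have h2 : 0 ≤ ∑ j ∈ T, p j := Finset.sum_nonneg fun j _ => hp j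
    simp only [util]
    linarith
  have hMpos : 0 < M := by
    have := hub_univ A
    rw [hM]
    linarith
  set e : Ω → ℝ := fun j => (if j ∈ G then 0 else M) + (if j = y then τ else 0) with he
  have he0 : ∀ j, 0 ≤ e j := by
    intro j
    rw [he]
    have h1 : (0:ℝ) ≤ if j ∈ G then 0 else M := by positivity
    have h2 : (0:ℝ) ≤ if j = y then τ else 0 := by positivity
    dsimp only
    linarith
  set r₂ : Ω → ℝ := fun j => p j + e j with hr₂
  set r₃ : Ω → ℝ := fun j => r₂ j + (if j = z then 1 else 0) with hr₃
  have hr₂0 : ∀ j, 0 ≤ r₂ j := fun j => add_nonneg (hp j) (he0 j)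
  have hr₂₃ : ∀ j, r₂ j ≤ r₃ j := by
    intro j
    rw [hr₃]
    have : (0:ℝ) ≤ if j = z then 1 else 0 := by positivity
    dsimp only
    linarith
  have util_r₂ : ∀ T, util v r₂ T = util v p T - ∑ j ∈ T, e j := by
    intro T
    simp only [util, hr₂, Finset.sum_add_distrib]
    ring
  -- exact value of the penalty for subsets of G
  have hsum : ∀ T ⊆ G, (∑ j ∈ T, e j) = if y ∈ T then τ else 0 := by
    intro T hT
    have : ∀ j ∈ T, e j = if j = y then τ else 0 := by
      intro j hj
      rw [he]
      simp only [hT hj, if_true]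
      ring_nf
    rw [Finset.sum_congr rfl this, Finset.sum_ite_eq' T y (fun _ => τ)]
  -- (a) sets not inside G are badly penalized
  have hTG : ∀ T : Finset Ω, ¬(T ⊆ G) → util v r₂ T ≤ uA - 1 := by
    intro T hT
    obtain ⟨x, hxT, hxG⟩ := Finset.not_subset.mp hT
    have hex : M ≤ e x := by
      have h2 : (0:ℝ) ≤ if x = y then τ else 0 := by positivity
      simp only [he, hxG, if_false]
      linarith
    have hsum_ge : M ≤ ∑ j ∈ T, e j :=
      le_trans hex (Finset.single_le_sum (fun j _ => he0 j) hxT)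
    have := hub_univ T
    rw [util_r₂]
    rw [hM] at hsum_ge
    linarith
  -- (b) + (c): all sets have r₂-utility at most uA
  have hub : ∀ T, util v r₂ T ≤ uA := by
    intro T
    by_cases hT : T ⊆ G
    · rw [util_r₂, hsum T hT]
      by_cases hyT : y ∈ T
      · simp only [hyT, if_true]
        have := hCmax' T hT
        rw [hτ]
        linarith
      · simp only [hyT, if_false]
        have := hYfree y hy T (fun a ha => Finset.mem_erase.mpr ⟨fun h => hyT (h ▸ ha), hT ha⟩)
        linarith
    · have := hTG T hT
      linarith
  -- C is demanded at r₂
  have hyC : y ∈ C := hGA C hCsub hCA hy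
  have hzC : z ∈ C := hGA C hCsub hCA hz
  have hC₂ : util v r₂ C = uA := by
    rw [util_r₂, hsum C hCsub]
    simp only [hyC, if_true]
    rw [hτ]
    ring
  have hCdem : C ∈ Demand v r₂ := fun T => by rw [hC₂]; exact hub T
  -- apply gross substitutes
  obtain ⟨T', hT'dem, hkeep⟩ := hgs r₂ r₃ hr₂0 hr₂₃ C hCdem
  have util_r₃ : ∀ T, util v r₃ T = util v r₂ T - (if z ∈ T then 1 else 0) := by
    intro T
    simp only [util, hr₃, Finset.sum_add_distrib,
      Finset.sum_ite_eq' T z (fun _ => (1:ℝ))]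
    ring
  -- the r₃-utility of A is uA
  have hA_r₂ : util v r₂ A = uA := by
    rw [util_r₂, hsum A hAG]
    simp only [hyA, if_false]
    ring
  have hA_r₃ : util v r₃ A = uA := by
    rw [util_r₃, hA_r₂]
    simp only [hzA, if_false]
    ring
  have hT'ge : uA ≤ util v r₃ T' := hA_r₃ ▸ hT'dem A
  have hzT' : z ∉ T' := by
    intro hzT'
    rw [util_r₃] at hT'ge
    simp only [hzT', if_true] at hT'ge
    have := hub T'
    linarith
  have hT'r₂ : util v r₂ T' = uA := by
    rw [util_r₃] at hT'ge
    simp only [hzT', if_false] at hT'ge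
    exact le_antisymm (hub T') (by linarith)
  have hyT' : y ∈ T' := by
    refine hkeep y hyC ?_
    rw [hr₃]
    simp only [hyz, if_false]
    ring
  have hT'G : T' ⊆ G := by
    by_contra hT'G
    have := hTG T' hT'G
    rw [hT'r₂] at this
    linarith
  have hT'util : util v p T' = u' := by
    have := hT'r₂
    rw [util_r₂, hsum T' hT'G] at this
    simp only [hyT', if_true] at this
    rw [hτ] at this
    linarith
  have : G \ A ⊆ T' := hGA T' hT'G (by rw [hT'util]; linarith [hCA])
  exact hzT' (this hz)

/-- Key per-player lemma: for a gross substitute integer-valued valuation and integer prices,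
the maximal utility after raising prices on `S` by one drops exactly by `fMin`. -/
lemma maxUtil_addInd [Fintype Ω] [DecidableEq Ω] {v : Finset Ω → ℝ}
    (hval : IsValuation v) (hgs : GrossSubstitute v) (hint : IsIntVal v)
    {p : Ω → ℝ} (hp : ∀ j, 0 ≤ p j) (hpint : IsIntVec p) (S : Finset Ω) :
    maxUtil v (addInd p S) = maxUtil v p - (fMin v p S : ℝ) := by
  classical
  set q := addInd p S with hq
  -- lower bound
  have hlow : maxUtil v p - (fMin v p S : ℝ) ≤ maxUtil v q := by
    obtain ⟨D, hD, hcard⟩ := fMin_spec v p S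
    have h1 : util v q D = util v p D - (fMin v p S : ℝ) := by
      rw [hq, util_addInd, hcard]
    have h2 : util v p D = maxUtil v p := demand_util_eq hD.1
    calc maxUtil v p - (fMin v p S : ℝ) = util v q D := by rw [h1, h2]
      _ ≤ maxUtil v q := util_le_maxUtil v q D
  -- upper bound
  obtain ⟨T, hTmem, hTmax⟩ := Finset.exists_max_image
    (Finset.univ.filter fun W => W ∈ Demand v q) (util v p)
    (by obtain ⟨W, hW, -⟩ := exists_demand v q
        exact ⟨W, by simp [hW]⟩)
  have hTq : T ∈ Demand v q := (Finset.mem_filter.mp hTmem).2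
  have hTmax' : ∀ W ∈ Demand v q, util v p W ≤ util v p T := fun W hW =>
    hTmax W (by simp [hW])
  -- T is also demanded at p
  have hTp : T ∈ Demand v p := by
    by_contra hTp
    obtain ⟨x, T', hT'sub, hT'gt⟩ := weakSI hval hgs hp hTp
    have h1 : util v p T + 1 ≤ util v p T' :=
      int_gap (util_int hint hpint T) (util_int hint hpint T') hT'gt
    have h2 : ((T' ∩ S).card : ℝ) ≤ ((T ∩ S).card : ℝ) + 1 := by
      have hsub : T' ∩ S ⊆ insert x (T ∩ S) := by
        intro j hj
        obtain ⟨hj1, hj2⟩ := Finset.mem_inter.mp hj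
        rcases Finset.mem_insert.mp (hT'sub hj1) with h | h
        · exact Finset.mem_insert.mpr (Or.inl h)
        · exact Finset.mem_insert_of_mem (Finset.mem_inter.mpr ⟨h, hj2⟩)
      have := (Finset.card_le_card hsub).trans (Finset.card_insert_le x (T ∩ S))
      exact_mod_cast this
    have h3 : util v q T ≤ util v q T' := by
      rw [hq, util_addInd, util_addInd]
      linarith
    have hT'q : T' ∈ Demand v q := fun W => (hTq W).trans h3
    exact absurd (hTmax' T' hT'q) (not_le.mpr hT'gt)
  obtain ⟨D, hD, hDT⟩ := exists_demandMin_subset hTp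
  have hfle : (fMin v p S : ℝ) ≤ ((T ∩ S).card : ℝ) := by
    have h1 : fMin v p S ≤ (D ∩ S).card := fMin_le hD S
    have h2 : (D ∩ S).card ≤ (T ∩ S).card :=
      Finset.card_le_card (Finset.inter_subset_inter_right hDT)
    exact_mod_cast h1.trans h2
  have hhigh : maxUtil v q ≤ maxUtil v p - (fMin v p S : ℝ) := by
    have h1 : maxUtil v q = util v q T := (demand_util_eq hTq).symm
    have h2 : util v q T = util v p T - ((T ∩ S).card : ℝ) := by rw [hq, util_addInd]
    have h3 : util v p T = maxUtil v p := demand_util_eq hTp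
    rw [h1, h2, h3]
    linarith
  exact le_antisymm hhigh hlow

end Aux

/-- `L(p + 1_S) = L(p) − f_p(S)`; hence maximizers of `f_p` are exactly the
minimizers of `T ↦ L(p + 1_T)`, and the inclusion-minimal maximizers of `f_p` coincide
with the inclusion-minimal minimizers of `T ↦ L(p + 1_T)` (so the Gul–Stacchetti and
Ausubel price-update sets coincide). -/
theorem gs_auctions_coincide {Ω : Type*} [Fintype Ω] [DecidableEq Ω] {n : ℕ}
    (v : Fin n → Finset Ω → ℝ) (hval : ∀ i, IsValuation (v i))
    (hgs : ∀ i, GrossSubstitute (v i)) (hint : ∀ i, IsIntVal (v i))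
    (p : Ω → ℝ) (hp : ∀ j, 0 ≤ p j) (hpint : IsIntVec p) :
    (∀ S : Finset Ω, Lyap v (addInd p S) = Lyap v p - (fTot v p S : ℝ)) ∧
    (∀ S : Finset Ω,
      (∀ T : Finset Ω, fTot v p T ≤ fTot v p S) ↔
      (∀ T : Finset Ω, Lyap v (addInd p S) ≤ Lyap v (addInd p T))) ∧
    (∀ S : Finset Ω,
      ((∀ T : Finset Ω, fTot v p T ≤ fTot v p S) ∧
        ∀ T : Finset Ω, T ⊂ S → fTot v p T < fTot v p S) ↔
      ((∀ T : Finset Ω, Lyap v (addInd p S) ≤ Lyap v (addInd p T)) ∧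
        ∀ T : Finset Ω, T ⊂ S → Lyap v (addInd p S) < Lyap v (addInd p T))) := by
  have key : ∀ S : Finset Ω, Lyap v (addInd p S) = Lyap v p - (fTot v p S : ℝ) := by
    intro S
    have hsum : (∑ j, addInd p S j) = (∑ j, p j) + (S.card : ℝ) := by
      simp only [addInd, Finset.sum_add_distrib]
      congr 1
      rw [Finset.sum_ite_mem, Finset.univ_inter, Finset.sum_const, nsmul_eq_mul, mul_one]
    have hmu : ∀ i, maxUtil (v i) (addInd p S) = maxUtil (v i) p - (fMin (v i) p S : ℝ) :=
      fun i => maxUtil_addInd (hval i) (hgs i) (hint i) hp hpint S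
    have hcast : (fTot v p S : ℝ) = (∑ i, (fMin (v i) p S : ℝ)) - (S.card : ℝ) := by
      rw [fTot]
      push_cast
      ring
    rw [Lyap, Lyap, hsum, hcast, Finset.sum_congr rfl fun i _ => hmu i,
      Finset.sum_sub_distrib]
    ring
  refine ⟨key, ?_, ?_⟩
  · intro S
    constructor
    · intro h T
      rw [key, key]
      have : (fTot v p T : ℝ) ≤ (fTot v p S : ℝ) := by exact_mod_cast h T
      linarith
    · intro h T
      have := h T
      rw [key, key] at this
      have : (fTot v p T : ℝ) ≤ (fTot v p S : ℝ) := by linarith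
      exact_mod_cast this
  · intro S
    constructor
    · rintro ⟨h1, h2⟩
      constructor
      · intro T
        rw [key, key]
        have : (fTot v p T : ℝ) ≤ (fTot v p S : ℝ) := by exact_mod_cast h1 T
        linarith
      · intro T hT
        rw [key, key]
        have : (fTot v p T : ℝ) < (fTot v p S : ℝ) := by exact_mod_cast h2 T hT
        linarith
    · rintro ⟨h1, h2⟩
      constructor
      · intro T
        have := h1 T
        rw [key, key] at this
        have : (fTot v p T : ℝ) ≤ (fTot v p S : ℝ) := by linarith
        exact_mod_cast this
      · intro T hT
        have := h2 T hT
        rw [key, key] at this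
        have : (fTot v p T : ℝ) < (fTot v p S : ℝ) := by linarith
        exact_mod_cast this
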